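/- Let ẙ₁,…,ẙ_N ∈ ℝ⁴ be unit vectors and k₁,…,k_N > 0. Suppose there exist indices j₁, j₂, j₃ with ẙ_{j₁,4} ≠ 0, ẙ_{j₂,4} ≠ 0, ẙ_{j₃,4} ≠ 0 and ẙ_{j₁}, ẙ_{j₂}, ẙ_{j₃} pairwise linearly independent in ℝ⁴, and such that the three vectors v_{j₁₂} := ẙ_{j₂,4}·ẙ̄_{j₁} − ẙ_{j₁,4}·ẙ̄_{j₂}, v_{j₂₃} := ẙ_{j₃,4}·ẙ̄_{j₂} − ẙ_{j₂,4}·ẙ̄_{j₃}, v_{j₃₁} := ẙ_{j₁,4}·ẙ̄_{j₃} − ẙ_{j₃,4}·ẙ̄_{j₁} are not all collinear (their span in ℝ³ has dimension at least 2) (Case 3 of the observability assumption: at least 3 position measurements). Then for every E ∈ SE(3), V(E) = 0 if and only if E = I₄; i.e. V has a unique global minimum at the identity. -/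

import Mathlib

open Matrix BigOperators

noncomputable section

/-- The Euclidean norm of a vector in `ℝⁿ`. -/
def enorm2 {n : ℕ} (x : Fin n → ℝ) : ℝ := Real.sqrt (∑ i, x i ^ 2)

/-- Normalization of a vector: `x / |x|`. -/
def nrm {n : ℕ} (x : Fin n → ℝ) : Fin n → ℝ := (enorm2 x)⁻¹ • x

/-- `R ∈ SO(3)`: rotation matrices. -/
def SO3 (R : Matrix (Fin 3) (Fin 3) ℝ) : Prop := Rᵀ * R = 1 ∧ R.det = 1

/-- The 4×4 block matrix `[[M, m],[0ᵀ, 0]]`. -/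
def blk (M : Matrix (Fin 3) (Fin 3) ℝ) (m : Fin 3 → ℝ) : Matrix (Fin 4) (Fin 4) ℝ :=
  fun i j =>
    if h : (i : ℕ) < 3 then
      if h' : (j : ℕ) < 3 then M ⟨i, h⟩ ⟨j, h'⟩ else m ⟨i, h⟩
    else 0

/-- The 4×4 block matrix `[[R, p],[0ᵀ, 1]]`. -/
def toSE3 (R : Matrix (Fin 3) (Fin 3) ℝ) (p : Fin 3 → ℝ) : Matrix (Fin 4) (Fin 4) ℝ :=
  fun i j =>
    if h : (i : ℕ) < 3 then
      if h' : (j : ℕ) < 3 then R ⟨i, h⟩ ⟨j, h'⟩ else p ⟨i, h⟩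
    else if (j : ℕ) < 3 then 0 else 1

/-- The Special Euclidean group SE(3), as a subset of `ℝ^{4×4}`. -/
def SE3 : Set (Matrix (Fin 4) (Fin 4) ℝ) := {X | ∃ R p, SO3 R ∧ X = toSE3 R p}

/-- The skew-symmetric matrix `ω_×` associated with the cross product by `ω`. -/
def crossMat (ω : Fin 3 → ℝ) : Matrix (Fin 3) (Fin 3) ℝ :=
  !![0, -ω 2, ω 1; ω 2, 0, -ω 0; -ω 1, ω 0, 0]

/-- The cross product on `ℝ³`. -/
def cross3 (u v : Fin 3 → ℝ) : Fin 3 → ℝ :=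
  ![u 1 * v 2 - u 2 * v 1, u 2 * v 0 - u 0 * v 2, u 0 * v 1 - u 1 * v 0]

/-- The Lie algebra se(3), as a subset of `ℝ^{4×4}`. -/
def se3 : Set (Matrix (Fin 4) (Fin 4) ℝ) := {A | ∃ ω V, A = blk (crossMat ω) V}

/-- The projection `P : ℝ^{4×4} → se(3)`:
`P([[M₁, m₂],[m₃ᵀ, m₄]]) = [[(M₁ − M₁ᵀ)/2, m₂],[0ᵀ, 0]]`. -/
def projP (M : Matrix (Fin 4) (Fin 4) ℝ) : Matrix (Fin 4) (Fin 4) ℝ :=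
  fun i j =>
    if (i : ℕ) < 3 then (if (j : ℕ) < 3 then (M i j - M j i) / 2 else M i j) else 0

/-- The trace (Frobenius) inner product `⟨M₁, M₂⟩ = tr(M₁ᵀ M₂)`. -/
def mip (M₁ M₂ : Matrix (Fin 4) (Fin 4) ℝ) : ℝ := (M₁ᵀ * M₂).trace

/-- First three components of a vector in `ℝ⁴`. -/
def vbar (x : Fin 4 → ℝ) : Fin 3 → ℝ := fun i => x (Fin.castSucc i)

/-- The vector `[v; c] ∈ ℝ⁴`. -/
def vec4 (v : Fin 3 → ℝ) (c : ℝ) : Fin 4 → ℝ := Fin.snoc v c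

/-- The innovation term `Δ(X̂, Y) = −P(Σᵢ kᵢ (I₄ − eᵢeᵢᵀ) ẙᵢ eᵢᵀ)` where
`eᵢ = X̂yᵢ/|X̂yᵢ|`. -/
def innov {N : ℕ} (k : Fin N → ℝ) (ystar y : Fin N → Fin 4 → ℝ)
    (Xh : Matrix (Fin 4) (Fin 4) ℝ) : Matrix (Fin 4) (Fin 4) ℝ :=
  -projP (∑ i, k i •
    ((1 - vecMulVec (nrm (Xh *ᵥ y i)) (nrm (Xh *ᵥ y i))) *
      vecMulVec (ystar i) (nrm (Xh *ᵥ y i))))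

/-! If `V(E) = 0` then each `Eẙᵢ` is a positive multiple of `ẙᵢ`. Since `E = [[R, p], [0ᵀ, 1]]`
preserves the fourth coordinate, every `ẙᵢ` with `ẙᵢ,₄ ≠ 0` is fixed by `E`, that is
`R ẙ̄ᵢ + ẙᵢ,₄ p = ẙ̄ᵢ`. Eliminating `p` between two such equations shows that `R` fixes the
vectors `v_{j₁₂}, v_{j₂₃}, v_{j₃₁}`, which span a plane. A rotation fixing a plane also fixes its
normal `u ⨯₃ v`, so it is the identity, and then `p = 0`. -/

lemma sum_mul_sq_eq_zero_iff {ι : Type*} [Fintype ι] {k f : ι → ℝ} (hk : ∀ i, 0 < k i) :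
    ∑ i, k i * f i ^ 2 = 0 ↔ ∀ i, f i = 0 := by
  rw [Finset.sum_eq_zero_iff_of_nonneg fun i _ => mul_nonneg (hk i).le (sq_nonneg _)]
  simp [(hk _).ne']

lemma enorm2_eq_norm {n : ℕ} (x : Fin n → ℝ) :
    enorm2 x = ‖(WithLp.toLp 2 x : EuclideanSpace ℝ (Fin n))‖ := by
  simp [enorm2, EuclideanSpace.norm_eq]

lemma enorm2_eq_zero {n : ℕ} {x : Fin n → ℝ} : enorm2 x = 0 ↔ x = 0 := by
  simp [enorm2_eq_norm]

lemma nrm_eq_self_of_enorm2_eq_one {n : ℕ} {x : Fin n → ℝ} (hx : enorm2 x = 1) : nrm x = x := by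
  simp [nrm, hx]

lemma eq_of_nrm_eq_of_apply_eq {n : ℕ} {z x : Fin n → ℝ} {i : Fin n} (hnrm : nrm z = x)
    (hi : z i = x i) (hxi : x i ≠ 0) : z = x := by
  have hz : enorm2 z ≠ 0 := by
    intro h0
    simp [← hnrm, nrm, h0] at hxi
  have hscale : z = enorm2 z • x := by rw [← hnrm, nrm, smul_inv_smul₀ hz]
  have hone : enorm2 z = 1 := by
    have := congrFun hscale i
    rw [hi, Pi.smul_apply, smul_eq_mul] at this
    exact (mul_eq_right₀ hxi).1 this.symm
  rwa [hone, one_smul] at hscale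

lemma mulVec_cross_mulVec (M : Matrix (Fin 3) (Fin 3) ℝ) (u v : Fin 3 → ℝ) :
    Mᵀ *ᵥ ((M *ᵥ u) ⨯₃ (M *ᵥ v)) = M.det • (u ⨯₃ v) := by
  ext i
  fin_cases i <;>
  · simp [cross_apply, mulVec, dotProduct, Fin.sum_univ_three, det_fin_three]
    ring

lemma SO3.mulVec_cross {R : Matrix (Fin 3) (Fin 3) ℝ} (hR : SO3 R) (u v : Fin 3 → ℝ) :
    R *ᵥ (u ⨯₃ v) = (R *ᵥ u) ⨯₃ (R *ᵥ v) := by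
  have hRRt : R * Rᵀ = 1 := mul_eq_one_comm.1 hR.1
  rw [← one_smul ℝ (u ⨯₃ v), ← hR.2, ← mulVec_cross_mulVec, mulVec_mulVec, hRRt, one_mulVec]

lemma SO3.eq_one_of_mulVec_eq_self {R : Matrix (Fin 3) (Fin 3) ℝ} (hR : SO3 R) {u v : Fin 3 → ℝ}
    (hu : R *ᵥ u = u) (hv : R *ᵥ v = v) (huv : LinearIndependent ℝ ![u, v]) : R = 1 := by
  set w := u ⨯₃ v
  have hw : R *ᵥ w = w := by rw [hR.mulVec_cross, hu, hv]
  -- `u`, `v`, `w` are the rows of an invertible matrix, since its determinant is `w ⬝ᵥ w`.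
  set M : Matrix (Fin 3) (Fin 3) ℝ := ![u, v, w]
  have hdet : M.det = w ⬝ᵥ w := by
    rw [← triple_product_eq_det, triple_product_permutation, triple_product_permutation]
  have hM : IsUnit M := by
    rw [isUnit_iff_isUnit_det, hdet, isUnit_iff_ne_zero]
    exact fun h => crossProduct_ne_zero_iff_linearIndependent.2 huv (dotProduct_self_eq_zero.1 h)
  have hMR : M * Rᵀ = M * 1 := by
    rw [mul_one]
    funext i
    fin_cases i
    · exact (vecMul_transpose R u).trans hu
    · exact (vecMul_transpose R v).trans hv
    · exact (vecMul_transpose R w).trans hw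
  simpa using hM.mul_left_cancel hMR

lemma exists_linearIndependent_pair_mem {K V : Type*} [DivisionRing K] [AddCommGroup V]
    [Module K V] {U : Submodule K V} (hU : 2 ≤ Module.finrank K U) :
    ∃ u ∈ U, ∃ v ∈ U, LinearIndependent K ![u, v] := by
  obtain ⟨f, hf⟩ := exists_linearIndependent_of_le_finrank hU
  refine ⟨f 0, (f 0).2, f 1, (f 1).2, ?_⟩
  have hpair : ![(f 0 : V), f 1] = U.subtype ∘ f := by
    ext i : 1
    fin_cases i <;> rfl
  exact hpair ▸ hf.map' U.subtype U.ker_subtype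

lemma SO3.eq_one_of_two_le_finrank_span {R : Matrix (Fin 3) (Fin 3) ℝ} (hR : SO3 R)
    {S : Set (Fin 3 → ℝ)} (hS : ∀ x ∈ S, R *ᵥ x = x)
    (hS2 : 2 ≤ Module.finrank ℝ (Submodule.span ℝ S)) : R = 1 := by
  have hfixed : Submodule.span ℝ S ≤ LinearMap.ker (R.mulVecLin - LinearMap.id) :=
    Submodule.span_le.2 fun x hx => by simp [hS x hx]
  obtain ⟨u, hu, v, hv, huv⟩ := exists_linearIndependent_pair_mem hS2
  have hfix : ∀ x ∈ Submodule.span ℝ S, R *ᵥ x = x := fun x hx => by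
    simpa [sub_eq_zero] using hfixed hx
  exact hR.eq_one_of_mulVec_eq_self (hfix u hu) (hfix v hv) huv

lemma mulVec_smul_sub_smul_eq_self {n R : Type*} [Fintype n] [CommRing R] {A : Matrix n n R}
    {p x y : n → R} {c d : R} (hx : A *ᵥ x + c • p = x) (hy : A *ᵥ y + d • p = y) :
    A *ᵥ (d • x - c • y) = d • x - c • y := by
  rw [mulVec_sub, mulVec_smul, mulVec_smul, eq_sub_of_add_eq hx, eq_sub_of_add_eq hy]
  module

lemma toSE3_mulVec_three (R : Matrix (Fin 3) (Fin 3) ℝ) (p : Fin 3 → ℝ) (x : Fin 4 → ℝ) :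
    (toSE3 R p *ᵥ x) 3 = x 3 := by
  simp [toSE3, mulVec, dotProduct, Fin.sum_univ_four]

lemma vbar_toSE3_mulVec (R : Matrix (Fin 3) (Fin 3) ℝ) (p : Fin 3 → ℝ) (x : Fin 4 → ℝ) :
    vbar (toSE3 R p *ᵥ x) = R *ᵥ vbar x + x 3 • p := by
  ext i
  fin_cases i <;>
  · simp [toSE3, vbar, mulVec, dotProduct, Fin.sum_univ_four, Fin.sum_univ_three]
    ring

lemma toSE3_one_zero : toSE3 (1 : Matrix (Fin 3) (Fin 3) ℝ) 0 = 1 := by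
  ext i j
  fin_cases i <;> fin_cases j <;> simp [toSE3, one_apply]

theorem lyapunov_unique_minimum_case3_general {N : ℕ} (ystar : Fin N → Fin 4 → ℝ)
    (hunit : ∀ i, enorm2 (ystar i) = 1) (k : Fin N → ℝ) (hk : ∀ i, 0 < k i)
    (j₁ j₂ j₃ : Fin N)
    (h4a : ystar j₁ 3 ≠ 0) (h4b : ystar j₂ 3 ≠ 0) (h4c : ystar j₃ 3 ≠ 0)
    (hnotcol : 2 ≤ Module.finrank ℝ
      ↥(Submodule.span ℝ
        ({ystar j₂ 3 • vbar (ystar j₁) - ystar j₁ 3 • vbar (ystar j₂),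
          ystar j₃ 3 • vbar (ystar j₂) - ystar j₂ 3 • vbar (ystar j₃),
          ystar j₁ 3 • vbar (ystar j₃) - ystar j₃ 3 • vbar (ystar j₁)} : Set (Fin 3 → ℝ))))
    (E : Matrix (Fin 4) (Fin 4) ℝ) (hE : E ∈ SE3) :
    (1 / 2 : ℝ) * ∑ i, k i * (enorm2 (nrm (E *ᵥ ystar i) - ystar i)) ^ 2 = 0 ↔ E = 1 := by
  simp only [mul_eq_zero, one_div, inv_eq_zero, OfNat.ofNat_ne_zero, false_or,
    sum_mul_sq_eq_zero_iff hk, enorm2_eq_zero, sub_eq_zero]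
  constructor
  · intro hnrm
    obtain ⟨R, p, hR, rfl⟩ := hE
    have hfix : ∀ i, ystar i 3 ≠ 0 → R *ᵥ vbar (ystar i) + ystar i 3 • p = vbar (ystar i) :=
      fun i hi => by
        rw [← vbar_toSE3_mulVec, eq_of_nrm_eq_of_apply_eq (hnrm i) (toSE3_mulVec_three ..) hi]
    obtain rfl : R = 1 := hR.eq_one_of_two_le_finrank_span (by
      rintro x (rfl | rfl | rfl) <;> exact mulVec_smul_sub_smul_eq_self (hfix _ ‹_›) (hfix _ ‹_›))
      hnotcol
    have hp : ystar j₁ 3 • p = 0 := by simpa using hfix j₁ h4a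
    rw [(smul_eq_zero.1 hp).resolve_left h4a, toSE3_one_zero]
  · rintro rfl i
    rw [one_mulVec, nrm_eq_self_of_enorm2_eq_one (hunit i)]

/-- under Case 3 of the observability assumption (at least three position
measurements), the cost `V(E) = (1/2)Σᵢ kᵢ |Eẙᵢ/|Eẙᵢ| − ẙᵢ|²` vanishes iff `E = I₄`. -/
theorem lyapunov_unique_minimum_case3 {N : ℕ} (ystar : Fin N → Fin 4 → ℝ)
    (hunit : ∀ i, enorm2 (ystar i) = 1) (k : Fin N → ℝ) (hk : ∀ i, 0 < k i)
    (j₁ j₂ j₃ : Fin N)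
    (h4a : ystar j₁ 3 ≠ 0) (h4b : ystar j₂ 3 ≠ 0) (h4c : ystar j₃ 3 ≠ 0)
    (hli12 : LinearIndependent ℝ ![ystar j₁, ystar j₂])
    (hli23 : LinearIndependent ℝ ![ystar j₂, ystar j₃])
    (hli31 : LinearIndependent ℝ ![ystar j₃, ystar j₁])
    (hnotcol : 2 ≤ Module.finrank ℝ
      ↥(Submodule.span ℝ
        ({ystar j₂ 3 • vbar (ystar j₁) - ystar j₁ 3 • vbar (ystar j₂),
          ystar j₃ 3 • vbar (ystar j₂) - ystar j₂ 3 • vbar (ystar j₃),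
          ystar j₁ 3 • vbar (ystar j₃) - ystar j₃ 3 • vbar (ystar j₁)} : Set (Fin 3 → ℝ))))
    (E : Matrix (Fin 4) (Fin 4) ℝ) (hE : E ∈ SE3) :
    (1 / 2 : ℝ) * ∑ i, k i * (enorm2 (nrm (E *ᵥ ystar i) - ystar i)) ^ 2 = 0 ↔ E = 1 :=
  lyapunov_unique_minimum_case3_general ystar hunit k hk j₁ j₂ j₃ h4a h4b h4c hnotcol E hE
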